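/- If the deformation gradient F(X) is an invertible matrix at a point X ∈ ℝ³, then for all indices α, γ ∈ {1,2,3} the second derivatives of the placement are determined by the first derivatives of C: ∂²χ^j/∂X^α∂X^γ (X) = (1/2) Σ_{β=1}^{3} ((F(X)ᵀ)⁻¹)^{jβ} · ( ∂C_{αβ}/∂X^γ + ∂C_{γβ}/∂X^α − ∂C_{γα}/∂X^β )(X) for each j ∈ {1,2,3}. -/

import Mathlib

/-- Partial derivative of a scalar field on ℝ³ in the coordinate direction `α`. -/
noncomputable def pd (f : (Fin 3 → ℝ) → ℝ) (α : Fin 3) : (Fin 3 → ℝ) → ℝ :=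
  fun X => fderiv ℝ f X (Pi.single α 1)

/-- Right Cauchy–Green tensor component C_{αβ} of the placement χ, as a function of X. -/
noncomputable def CG (χ : (Fin 3 → ℝ) → (Fin 3 → ℝ)) (α β : Fin 3) : (Fin 3 → ℝ) → ℝ :=
  fun X => ∑ i, pd (fun Y => χ Y i) α X * pd (fun Y => χ Y i) β X

/-- The deformation gradient F(X), with entries F^i_α = ∂χ^i/∂X^α, as a matrix. -/
noncomputable def Fgrad (χ : (Fin 3 → ℝ) → (Fin 3 → ℝ)) (X : Fin 3 → ℝ) :
    Matrix (Fin 3) (Fin 3) ℝ :=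
  Matrix.of fun i α => pd (fun Y => χ Y i) α X

/-- Smoothness of the partial derivative of a smooth function. -/
lemma pd_contDiff {f : (Fin 3 → ℝ) → ℝ} (hf : ContDiff ℝ (⊤ : ℕ∞) f) (α : Fin 3) :
    ContDiff ℝ (⊤ : ℕ∞) (pd f α) := by
  have h1 : ContDiff ℝ (⊤ : ℕ∞) (fderiv ℝ f) := hf.fderiv_right (by exact le_rfl)
  exact (ContinuousLinearMap.apply ℝ ℝ (Pi.single α 1 : Fin 3 → ℝ)).contDiff.comp h1

/-- Product rule for `pd`. -/
lemma pd_mul {g h : (Fin 3 → ℝ) → ℝ} (hg : ContDiff ℝ (⊤ : ℕ∞) g) (hh : ContDiff ℝ (⊤ : ℕ∞) h)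
    (γ : Fin 3) (X : Fin 3 → ℝ) :
    pd (fun Y => g Y * h Y) γ X = pd g γ X * h X + g X * pd h γ X := by
  have := fderiv_fun_mul (𝕜 := ℝ) (hg.differentiable (by simp) X) (hh.differentiable (by simp) X)
  simp only [pd, this]
  simp only [ContinuousLinearMap.add_apply, ContinuousLinearMap.smul_apply, smul_eq_mul]
  ring

/-- Schwarz symmetry of second partial derivatives. -/
lemma pd_comm {f : (Fin 3 → ℝ) → ℝ} (hf : ContDiff ℝ (⊤ : ℕ∞) f) (α γ : Fin 3) (X : Fin 3 → ℝ) :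
    pd (pd f α) γ X = pd (pd f γ) α X := by
  have hd1 : ContDiff ℝ (⊤ : ℕ∞) (fderiv ℝ f) := hf.fderiv_right (by exact le_rfl)
  have hdiff : DifferentiableAt ℝ (fderiv ℝ f) X := (hd1.differentiable (by simp)) X
  have happ : ∀ (δ ε : Fin 3),
      pd (pd f δ) ε X = (fderiv ℝ (fderiv ℝ f) X) (Pi.single ε 1) (Pi.single δ 1) := by
    intro δ ε
    have : pd f δ = fun Y => (fderiv ℝ f Y) (Pi.single δ 1) := rfl
    rw [pd, this]
    have hd : DifferentiableAt ℝ (fderiv ℝ f) X := hdiff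
    have hu : DifferentiableAt ℝ (fun _ : Fin 3 → ℝ => (Pi.single δ 1 : Fin 3 → ℝ)) X :=
      differentiableAt_const _
    rw [fderiv_clm_apply hd hu]
    simp
  rw [happ α γ, happ γ α]
  exact second_derivative_symmetric
    (fun y => (hf.differentiable (by simp) y).hasFDerivAt)
    hdiff.hasFDerivAt _ _

/-- If F(X) is invertible, the second derivatives of χ are determined by first
derivatives of C: ∂²χ^j/∂X^α∂X^γ = ½ Σ_β ((Fᵀ)⁻¹)^{jβ}(∂C_{αβ}/∂X^γ + ∂C_{γβ}/∂X^α − ∂C_{γα}/∂X^β). -/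
theorem piola_second_derivatives_from_C
    (χ : (Fin 3 → ℝ) → (Fin 3 → ℝ)) (hχ : ContDiff ℝ (⊤ : ℕ∞) χ)
    (X : Fin 3 → ℝ) (hF : IsUnit (Fgrad χ X))
    (α γ : Fin 3) :
    ∀ j : Fin 3, pd (pd (fun Y => χ Y j) α) γ X
      = (1 / 2) * ∑ β, ((Fgrad χ X).transpose)⁻¹ j β *
          (pd (CG χ α β) γ X + pd (CG χ γ β) α X - pd (CG χ γ α) β X) := by
  intro j
  have hfi : ∀ i : Fin 3, ContDiff ℝ (⊤ : ℕ∞) (fun Y => χ Y i) := fun i => contDiff_pi.mp hχ i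
  -- first derivatives and second derivatives
  set A : Fin 3 → Fin 3 → ℝ := fun i δ => pd (fun Y => χ Y i) δ X with hA
  set T : Fin 3 → Fin 3 → Fin 3 → ℝ := fun i δ ε => pd (pd (fun Y => χ Y i) δ) ε X with hT
  have hTsymm : ∀ i δ ε, T i δ ε = T i ε δ := fun i δ ε => pd_comm (hfi i) δ ε X
  -- derivative of CG
  have hCG : ∀ (δ ε η : Fin 3),
      pd (CG χ δ ε) η X = ∑ i, (T i δ η * A i ε + A i δ * T i ε η) := by
    intro δ ε η
    have : CG χ δ ε = fun Y => ∑ i, pd (fun Z => χ Z i) δ Y * pd (fun Z => χ Z i) ε Y := rfl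
    rw [this]
    have hsum : pd (fun Y => ∑ i, pd (fun Z => χ Z i) δ Y * pd (fun Z => χ Z i) ε Y) η X
        = ∑ i, pd (fun Y => pd (fun Z => χ Z i) δ Y * pd (fun Z => χ Z i) ε Y) η X := by
      rw [pd]
      rw [fderiv_fun_sum (fun i _ => ((((pd_contDiff (hfi i) δ).mul
        (pd_contDiff (hfi i) ε))).differentiable (by simp) X))]
      simp [pd]
    rw [hsum]
    refine Finset.sum_congr rfl fun i _ => ?_
    exact pd_mul (pd_contDiff (hfi i) δ) (pd_contDiff (hfi i) ε) η X
  -- the combination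
  have hcomb : ∀ β : Fin 3,
      pd (CG χ α β) γ X + pd (CG χ γ β) α X - pd (CG χ γ α) β X
        = ∑ i, 2 * (T i α γ * A i β) := by
    intro β
    rw [hCG α β γ, hCG γ β α, hCG γ α β, ← Finset.sum_add_distrib, ← Finset.sum_sub_distrib]
    refine Finset.sum_congr rfl fun i _ => ?_
    have h1 := hTsymm i γ α
    have h2 := hTsymm i β α
    have h3 := hTsymm i β γ
    rw [h1, h2, h3]
    ring
  -- matrix identity
  have hdet : IsUnit (Fgrad χ X).det := (Matrix.isUnit_iff_isUnit_det _).mp hF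
  have hinv : ((Fgrad χ X).transpose)⁻¹ * (Fgrad χ X).transpose = 1 := by
    apply Matrix.nonsing_inv_mul
    rwa [Matrix.det_transpose]
  calc pd (pd (fun Y => χ Y j) α) γ X
      = ∑ i, (((Fgrad χ X).transpose)⁻¹ * (Fgrad χ X).transpose) j i * T i α γ := by
        rw [hinv]; simp [Matrix.one_apply, T]
    _ = (1 / 2) * ∑ β, ((Fgrad χ X).transpose)⁻¹ j β *
          (pd (CG χ α β) γ X + pd (CG χ γ β) α X - pd (CG χ γ α) β X) := by
        simp only [hcomb, Matrix.mul_apply, Finset.sum_mul, Finset.mul_sum]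
        rw [Finset.sum_comm]
        refine Finset.sum_congr rfl fun β _ => Finset.sum_congr rfl fun i _ => ?_
        show ((Fgrad χ X).transpose)⁻¹ j β * A i β * T i α γ
          = 1/2 * (((Fgrad χ X).transpose)⁻¹ j β * (2 * (T i α γ * A i β)))
        ring
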